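/- Let T be an 𝒪-operator of a BiHom-pre-alternative algebra (A, ≺, ≻, α, β) associated to a bimodule (V, L_≺, R_≺, L_≻, R_≻, φ, ψ). Then V carries a BiHom-alternative quadri-algebra structure given by u↘v = L_≻(T(u))v, u↗v = R_≻(T(v))u, u↙v = L_≺(T(u))v, u↖v = R_≺(T(v))u, with structure maps φ, ψ. -/
import Mathlib


variable {K : Type*} [Field K] {A : Type*} [AddCommGroup A] [Module K A]
  {V : Type*} [AddCommGroup V] [Module K V]

/-- The right BiHom-associator of a pair of bilinear operations `p = ≺`, `s = ≻`. -/
def preAsR (p s : A →ₗ[K] A →ₗ[K] A) (α β : A →ₗ[K] A) (x y z : A) : A :=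
  p (p x y) (β z) - p (α x) (p y z + s y z)

/-- The middle BiHom-associator. -/
def preAsM (p s : A →ₗ[K] A →ₗ[K] A) (α β : A →ₗ[K] A) (x y z : A) : A :=
  p (s x y) (β z) - s (α x) (p y z)

/-- The left BiHom-associator. -/
def preAsL (p s : A →ₗ[K] A →ₗ[K] A) (α β : A →ₗ[K] A) (x y z : A) : A :=
  s (p x y + s x y) (β z) - s (α x) (s y z)

/-- A BiHom-pre-alternative algebra structure on `A`, with `p = ≺` and `s = ≻`. -/
structure IsBiHomPreAlternative (p s : A →ₗ[K] A →ₗ[K] A) (α β : A →ₗ[K] A) : Prop where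
  hαβ : ∀ x, α (β x) = β (α x)
  hαp : ∀ x y, α (p x y) = p (α x) (α y)
  hαs : ∀ x y, α (s x y) = s (α x) (α y)
  hβp : ∀ x y, β (p x y) = p (β x) (β y)
  hβs : ∀ x y, β (s x y) = s (β x) (β y)
  hr : ∀ x y z, preAsR p s α β x (β y) (α z) + preAsR p s α β x (β z) (α y) = 0
  hl : ∀ x y z, preAsL p s α β (β x) (α y) z + preAsL p s α β (β y) (α x) z = 0
  hmr : ∀ x y z, preAsM p s α β (β x) (α y) z + preAsR p s α β (β y) (α x) z = 0
  hml : ∀ x y z, preAsM p s α β x (β y) (α z) + preAsL p s α β x (β z) (α y) = 0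
/-- A bimodule of a BiHom-pre-alternative algebra `(A, p, s, α, β)` (with `p = ≺`, `s = ≻`). -/
structure IsBiHomPreAltBimodule (p s : A →ₗ[K] A →ₗ[K] A) (α β : A →ₗ[K] A)
    (Lp Rp Ls Rs : A →ₗ[K] V →ₗ[K] V) (φ ψ : V →ₗ[K] V) : Prop where
  hφψ : ∀ v, φ (ψ v) = ψ (φ v)
  hφLp : ∀ x v, φ (Lp x v) = Lp (α x) (φ v)
  hψLp : ∀ x v, ψ (Lp x v) = Lp (β x) (ψ v)
  hφRp : ∀ x v, φ (Rp x v) = Rp (α x) (φ v)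
  hψRp : ∀ x v, ψ (Rp x v) = Rp (β x) (ψ v)
  hφLs : ∀ x v, φ (Ls x v) = Ls (α x) (φ v)
  hψLs : ∀ x v, ψ (Ls x v) = Ls (β x) (ψ v)
  hφRs : ∀ x v, φ (Rs x v) = Rs (α x) (φ v)
  hψRs : ∀ x v, ψ (Rs x v) = Rs (β x) (ψ v)
  b1 : ∀ x v, Ls (p (β x) (α x) + s (β x) (α x)) (ψ v) = Ls (α (β x)) (Ls (α x) v)
  b2 : ∀ x y v, Rs (β y) (Lp (β x) (φ v) + Ls (β x) (φ v) + Rp (α x) (ψ v) + Rs (α x) (ψ v)) =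
    Ls (α (β x)) (Rs y (φ v)) + Rs (s (α x) y) (φ (ψ v))
  b3 : ∀ x v, Rp (α (β x)) (Rp (β x) v) = Rp (p (β x) (α x) + s (β x) (α x)) (φ v)
  b4 : ∀ x y v, Lp (α y) (Lp (β x) (φ v) + Ls (β x) (φ v) + Rp (α x) (ψ v) + Rs (α x) (ψ v)) =
    Lp (p y (β x)) (φ (ψ v)) + Rp (α (β x)) (Lp y (ψ v))
  b5 : ∀ x y v, Lp (s (β x) (α y) + p (β y) (α x)) (ψ v) =
    Ls (α (β x)) (Lp (α y) v) + Lp (α (β y)) (Lp (α x) v + Ls (α x) v)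
  b6 : ∀ x y v, Rp (β y) (Ls (β x) (φ v) + Rp (α x) (ψ v)) =
    Ls (α (β x)) (Rp y (φ v)) + Rp (p (α x) y + s (α x) y) (φ (ψ v))
  b7 : ∀ x y v, Rp (β y) (Rs (α x) (ψ v) + Lp (β x) (φ v)) =
    Rs (p (α x) y) (φ (ψ v)) + Lp (α (β x)) (Rp y (φ v) + Rs y (φ v))
  b8 : ∀ x y v, Rp (α (β y)) (Rs (β x) v) + Rs (α (β x)) (Rp (β y) v + Rs (β y) v) =
    Rs (p (β x) (α y)) (φ v) + Rs (s (β y) (α x)) (φ v)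
  b9 : ∀ x y v, Rp (α (β y)) (Ls x (ψ v)) + Ls (p x (β y) + s x (β y)) (φ (ψ v)) =
    Ls (α x) (Rp (α y) (ψ v) + Ls (β y) (φ v))
  b10 : ∀ x y v, Lp (s x (β y)) (φ (ψ v)) + Rs (α (β y)) (Lp x (ψ v) + Ls x (ψ v)) =
    Ls (α x) (Lp (β y) (φ v)) + Ls (α x) (Rs (α y) (ψ v))
set_option linter.unusedVariables false

/-- Quadri-associator `{x,y,z}^r = (x↖y)↖β(z) − α(x)↖(y∗z)`. -/
def qAsR (nw sw ne se : A →ₗ[K] A →ₗ[K] A) (α β : A →ₗ[K] A) (x y z : A) : A :=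
  nw (nw x y) (β z) - nw (α x) (nw y z + sw y z + ne y z + se y z)

/-- Quadri-associator `{x,y,z}^l = (x∗y)↘β(z) − α(x)↘(y↘z)`. -/
def qAsL (nw sw ne se : A →ₗ[K] A →ₗ[K] A) (α β : A →ₗ[K] A) (x y z : A) : A :=
  se (nw x y + sw x y + ne x y + se x y) (β z) - se (α x) (se y z)

/-- Quadri-associator `{x,y,z}^{ne} = (x∧y)↗β(z) − α(x)↗(y≻z)`. -/
def qAsNE (nw sw ne se : A →ₗ[K] A →ₗ[K] A) (α β : A →ₗ[K] A) (x y z : A) : A :=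
  ne (ne x y + nw x y) (β z) - ne (α x) (ne y z + se y z)

/-- Quadri-associator `{x,y,z}^{sw} = (x≺y)↙β(z) − α(x)↙(y∨z)`. -/
def qAsSW (nw sw ne se : A →ₗ[K] A →ₗ[K] A) (α β : A →ₗ[K] A) (x y z : A) : A :=
  sw (nw x y + sw x y) (β z) - sw (α x) (se y z + sw y z)

/-- Quadri-associator `{x,y,z}^n = (x↗y)↖β(z) − α(x)↗(y≺z)`. -/
def qAsN (nw sw ne se : A →ₗ[K] A →ₗ[K] A) (α β : A →ₗ[K] A) (x y z : A) : A :=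
  nw (ne x y) (β z) - ne (α x) (nw y z + sw y z)

/-- Quadri-associator `{x,y,z}^w = (x↙y)↖β(z) − α(x)↙(y∧z)`. -/
def qAsW (nw sw ne se : A →ₗ[K] A →ₗ[K] A) (α β : A →ₗ[K] A) (x y z : A) : A :=
  nw (sw x y) (β z) - sw (α x) (ne y z + nw y z)

/-- Quadri-associator `{x,y,z}^s = (x≻y)↙β(z) − α(x)↘(y↙z)`. -/
def qAsS (nw sw ne se : A →ₗ[K] A →ₗ[K] A) (α β : A →ₗ[K] A) (x y z : A) : A :=
  sw (ne x y + se x y) (β z) - se (α x) (sw y z)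

/-- Quadri-associator `{x,y,z}^e = (x∨y)↗β(z) − α(x)↘(y↗z)`. -/
def qAsE (nw sw ne se : A →ₗ[K] A →ₗ[K] A) (α β : A →ₗ[K] A) (x y z : A) : A :=
  ne (se x y + sw x y) (β z) - se (α x) (ne y z)

/-- Quadri-associator `{x,y,z}^m = (x↘y)↖β(z) − α(x)↘(y↖z)`. -/
def qAsM (nw sw ne se : A →ₗ[K] A →ₗ[K] A) (α β : A →ₗ[K] A) (x y z : A) : A :=
  nw (se x y) (β z) - se (α x) (nw y z)

/-- A BiHom-alternative quadri-algebra structure on `A`,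
with operations `nw = ↖`, `sw = ↙`, `ne = ↗`, `se = ↘`. -/
structure IsBiHomAltQuadri (nw sw ne se : A →ₗ[K] A →ₗ[K] A) (α β : A →ₗ[K] A) : Prop where
  hαβ : ∀ x, α (β x) = β (α x)
  hαnw : ∀ x y, α (nw x y) = nw (α x) (α y)
  hαsw : ∀ x y, α (sw x y) = sw (α x) (α y)
  hαne : ∀ x y, α (ne x y) = ne (α x) (α y)
  hαse : ∀ x y, α (se x y) = se (α x) (α y)
  hβnw : ∀ x y, β (nw x y) = nw (β x) (β y)
  hβsw : ∀ x y, β (sw x y) = sw (β x) (β y)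
  hβne : ∀ x y, β (ne x y) = ne (β x) (β y)
  hβse : ∀ x y, β (se x y) = se (β x) (β y)
  ax1 : ∀ x y z, qAsR nw sw ne se α β (β x) (α y) z + qAsM nw sw ne se α β (β y) (α x) z = 0
  ax2 : ∀ x y z, qAsN nw sw ne se α β (β x) (α y) z + qAsW nw sw ne se α β (β y) (α x) z = 0
  ax3 : ∀ x y z, qAsNE nw sw ne se α β (β x) (α y) z + qAsE nw sw ne se α β (β y) (α x) z = 0
  ax4 : ∀ x y z, qAsSW nw sw ne se α β (β x) (α y) z + qAsS nw sw ne se α β (β y) (α x) z = 0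
  ax5 : ∀ x y z, qAsL nw sw ne se α β (β x) (α y) z + qAsL nw sw ne se α β (β y) (α x) z = 0
  ax6 : ∀ x y z, qAsR nw sw ne se α β x (β y) (α z) + qAsR nw sw ne se α β x (β z) (α y) = 0
  ax7 : ∀ x y z, qAsN nw sw ne se α β x (β y) (α z) + qAsNE nw sw ne se α β x (β z) (α y) = 0
  ax8 : ∀ x y z, qAsW nw sw ne se α β x (β y) (α z) + qAsSW nw sw ne se α β x (β z) (α y) = 0
  ax9 : ∀ x y z, qAsM nw sw ne se α β x (β y) (α z) + qAsL nw sw ne se α β x (β z) (α y) = 0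
  ax10 : ∀ x y z, qAsS nw sw ne se α β x (β y) (α z) + qAsE nw sw ne se α β x (β z) (α y) = 0

/-- An `𝒪`-operator of a BiHom-pre-alternative algebra associated to a
bimodule induces a BiHom-alternative quadri-algebra structure on `V`:
`u↘v = L_≻(T(u))v`, `u↗v = R_≻(T(v))u`, `u↙v = L_≺(T(u))v`, `u↖v = R_≺(T(v))u`. -/
theorem oOperator_preAlt_toAltQuadri
    (p s : A →ₗ[K] A →ₗ[K] A) (α β : A →ₗ[K] A)
    (Lp Rp Ls Rs : A →ₗ[K] V →ₗ[K] V) (φ ψ : V →ₗ[K] V) (T : V →ₗ[K] A)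
    (hpre : IsBiHomPreAlternative p s α β)
    (hbim : IsBiHomPreAltBimodule p s α β Lp Rp Ls Rs φ ψ)
    (hTs : ∀ u v, s (T u) (T v) = T (Ls (T u) v + Rs (T v) u))
    (hTp : ∀ u v, p (T u) (T v) = T (Lp (T u) v + Rp (T v) u))
    (hTφ : ∀ u, T (φ u) = α (T u))
    (hTψ : ∀ u, T (ψ u) = β (T u)) :
    IsBiHomAltQuadri ((Rp.comp T).flip) (Lp.comp T) ((Rs.comp T).flip) (Ls.comp T) φ ψ := by
  obtain ⟨hφψ, hφLp, hψLp, hφRp, hψRp, hφLs, hψLs, hφRs, hψRs,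
    b1, b2, b3, b4, b5, b6, b7, b8, b9, b10⟩ := hbim
  have hstar : ∀ u v : V,
      T (Rp (T v) u + Lp (T u) v + Rs (T v) u + Ls (T u) v)
        = p (T u) (T v) + s (T u) (T v) := by
    intro u v
    have hp := hTp u v
    have hs := hTs u v
    simp only [map_add] at hp hs ⊢
    rw [hp, hs]; abel
  have hsucc : ∀ u v : V, T (Rs (T v) u + Ls (T u) v) = s (T u) (T v) := by
    intro u v
    have hs := hTs u v
    simp only [map_add] at hs ⊢
    rw [hs]; abel
  have hprec : ∀ u v : V, T (Rp (T v) u + Lp (T u) v) = p (T u) (T v) := by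
    intro u v
    have hp := hTp u v
    simp only [map_add] at hp ⊢
    rw [hp]; abel
  constructor
  · exact hφψ
  · intro x y
    simp [hφRp, hTφ]
  · intro x y
    simp [hφLp, hTφ]
  · intro x y
    simp [hφRs, hTφ]
  · intro x y
    simp [hφLs, hTφ]
  · intro x y
    simp [hψRp, hTψ]
  · intro x y
    simp [hψLp, hTψ]
  · intro x y
    simp [hψRs, hTψ]
  · intro x y
    simp [hψLs, hTψ]
  · -- ax1 : from b6
    intro x y z
    have h := b6 (T y) (T z) x
    simp only [qAsR, qAsM, LinearMap.flip_apply, LinearMap.coe_comp, Function.comp_apply]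
    simp only [hstar, hsucc, hprec]
    simp only [hTφ, hTψ, map_add, LinearMap.add_apply,
      hpre.hαβ, hφψ] at h ⊢
    linear_combination (norm := module) h
  · -- ax2 : from b7
    intro x y z
    have h := b7 (T y) (T z) x
    simp only [qAsN, qAsW, LinearMap.flip_apply, LinearMap.coe_comp, Function.comp_apply]
    simp only [hstar, hsucc, hprec]
    simp only [hTφ, hTψ, map_add, LinearMap.add_apply,
      hpre.hαβ, hφψ] at h ⊢
    linear_combination (norm := module) h
  · -- ax3 : from b2
    intro x y z
    have h := b2 (T y) (T z) x
    simp only [qAsNE, qAsE, LinearMap.flip_apply, LinearMap.coe_comp, Function.comp_apply]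
    simp only [hstar, hsucc, hprec]
    simp only [hTφ, hTψ, map_add, LinearMap.add_apply,
      hpre.hαβ, hφψ] at h ⊢
    linear_combination (norm := module) h
  · -- ax4 : from b5
    intro x y z
    have h := b5 (T y) (T x) z
    simp only [qAsSW, qAsS, LinearMap.flip_apply, LinearMap.coe_comp, Function.comp_apply]
    simp only [hstar, hsucc, hprec]
    simp only [hTφ, hTψ, map_add, LinearMap.add_apply,
      hpre.hαβ, hφψ] at h ⊢
    linear_combination (norm := module) h
  · -- ax5 : polarization of b1
    intro x y z
    have h1 := b1 (T x + T y) z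
    have h2 := b1 (T x) z
    have h3 := b1 (T y) z
    simp only [qAsL, LinearMap.flip_apply, LinearMap.coe_comp, Function.comp_apply]
    simp only [hstar, hsucc, hprec]
    simp only [hTφ, hTψ, map_add, LinearMap.add_apply,
      hpre.hαβ, hφψ] at h1 h2 h3 ⊢
    linear_combination (norm := module) h1 - h2 - h3
  · -- ax6 : polarization of b3
    intro x y z
    have h1 := b3 (T y + T z) x
    have h2 := b3 (T y) x
    have h3 := b3 (T z) x
    simp only [qAsR, LinearMap.flip_apply, LinearMap.coe_comp, Function.comp_apply]
    simp only [hstar, hsucc, hprec]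
    simp only [hTφ, hTψ, map_add, LinearMap.add_apply,
      hpre.hαβ, hφψ] at h1 h2 h3 ⊢
    linear_combination (norm := module) h1 - h2 - h3
  · -- ax7 : from b8
    intro x y z
    have h := b8 (T y) (T z) x
    simp only [qAsN, qAsNE, LinearMap.flip_apply, LinearMap.coe_comp, Function.comp_apply]
    simp only [hstar, hsucc, hprec]
    simp only [hTφ, hTψ, map_add, LinearMap.add_apply,
      hpre.hαβ, hφψ] at h ⊢
    linear_combination (norm := module) h
  · -- ax8 : from b4
    intro x y z
    have h := b4 (T z) (T x) y
    simp only [qAsW, qAsSW, LinearMap.flip_apply, LinearMap.coe_comp, Function.comp_apply]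
    simp only [hstar, hsucc, hprec]
    simp only [hTφ, hTψ, map_add, LinearMap.add_apply,
      hpre.hαβ, hφψ] at h ⊢
    linear_combination (norm := module) -h
  · -- ax9 : from b9
    intro x y z
    have h := b9 (T x) (T z) y
    simp only [qAsM, qAsL, LinearMap.flip_apply, LinearMap.coe_comp, Function.comp_apply]
    simp only [hstar, hsucc, hprec]
    simp only [hTφ, hTψ, map_add, LinearMap.add_apply,
      hpre.hαβ, hφψ] at h ⊢
    linear_combination (norm := module) h
  · -- ax10 : from b10
    intro x y z
    have h := b10 (T x) (T y) z
    simp only [qAsS, qAsE, LinearMap.flip_apply, LinearMap.coe_comp, Function.comp_apply]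
    simp only [hstar, hsucc, hprec]
    simp only [hTφ, hTψ, map_add, LinearMap.add_apply,
      hpre.hαβ, hφψ] at h ⊢
    linear_combination (norm := module) h
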